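/- arXiv:2403.17754 — 3 statements merged into one kernel-verified Lean document; each statement's English description precedes it below -/
import Mathlib

section
/- Let ε ∈ (0,1/20), μ > 0, and Δ > 0. Let θ be a unit vector in ℝ², let S be a strip in direction θ of width εΔ/(2μ) (i.e., the set of points within distance εΔ/(4μ) of some line parallel to θ). Let A and B be finite subsets of S such that for all a ∈ A and b ∈ B we have ⟨a,θ⟩ < ⟨b,θ⟩. Let a* ∈ A maximize ⟨a,θ⟩ over A. Then for all a ∈ A and b ∈ B: ‖a − a*‖ + ‖a* − b‖ ≤ ‖a − b‖ + εΔ/μ. -/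
open scoped RealInnerProductSpace

private lemma perp_le {E : Type*} [NormedAddCommGroup E] [InnerProductSpace ℝ E]
    (θ v : E) (hθ : ‖θ‖ = 1) : ‖v - ⟪v, θ⟫ • θ‖ ≤ ‖v‖ := by
  have h : ‖v - ⟪v, θ⟫ • θ‖ ^ 2 ≤ ‖v‖ ^ 2 := by
    have hx := norm_sub_sq_real v (⟪v, θ⟫ • θ)
    have h1 : ⟪v, ⟪v, θ⟫ • θ⟫ = ⟪v, θ⟫ * ⟪v, θ⟫ := by
      rw [real_inner_smul_right]
    have h2 : ‖⟪v, θ⟫ • θ‖ = |⟪v, θ⟫| := by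
      rw [norm_smul, hθ]; simp
    rw [h1, h2] at hx
    nlinarith [sq_abs ⟪v, θ⟫]
  exact le_of_pow_le_pow_left₀ two_ne_zero (norm_nonneg v) h

private lemma strip_dist {E : Type*} [NormedAddCommGroup E] [InnerProductSpace ℝ E]
    (θ c : E) (hθ : ‖θ‖ = 1) (w : ℝ) (p q : E)
    (hp : ∃ t : ℝ, ‖p - (c + t • θ)‖ ≤ w) (hq : ∃ t : ℝ, ‖q - (c + t • θ)‖ ≤ w) :
    ‖p - q‖ ≤ |⟪p - q, θ⟫| + 2 * w := by
  obtain ⟨t1, hp⟩ := hp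
  obtain ⟨t2, hq⟩ := hq
  set u := p - (c + t1 • θ) with hu
  set v := q - (c + t2 • θ) with hv
  have hθ2 : ⟪θ, θ⟫ = 1 := by
    rw [real_inner_self_eq_norm_sq, hθ]; norm_num
  have hpq : p - q = u - v + (t1 - t2) • θ := by
    rw [hu, hv]; module
  have hinner : ⟪p - q, θ⟫ = ⟪u, θ⟫ - ⟪v, θ⟫ + (t1 - t2) := by
    rw [hpq, inner_add_left, inner_sub_left, real_inner_smul_left, hθ2]; ring
  have hperp : p - q - ⟪p - q, θ⟫ • θ = (u - ⟪u, θ⟫ • θ) - (v - ⟪v, θ⟫ • θ) := by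
    rw [hinner, hpq]
    module
  calc ‖p - q‖ = ‖⟪p - q, θ⟫ • θ + (p - q - ⟪p - q, θ⟫ • θ)‖ := by
        congr 1; abel
    _ ≤ ‖⟪p - q, θ⟫ • θ‖ + ‖p - q - ⟪p - q, θ⟫ • θ‖ := norm_add_le _ _
    _ ≤ |⟪p - q, θ⟫| + 2 * w := by
        rw [norm_smul, hθ, mul_one, Real.norm_eq_abs, hperp]
        have := norm_sub_le (u - ⟪u, θ⟫ • θ) (v - ⟪v, θ⟫ • θ)
        have h1 := perp_le θ u hθ
        have h2 := perp_le θ v hθ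
        linarith

/-- within a strip of width εΔ/(2μ) in direction θ, routing through
the point `astar` of `A` with maximum score costs at most an additive εΔ/μ. -/
theorem stmt_0 (ε μ Δ : ℝ) (hε : ε ∈ Set.Ioo (0:ℝ) (1/20)) (hμ : 0 < μ) (hΔ : 0 < Δ)
    (θ c : EuclideanSpace ℝ (Fin 2)) (hθ : ‖θ‖ = 1)
    (A B : Finset (EuclideanSpace ℝ (Fin 2)))
    (hA : ∀ p ∈ A, ∃ t : ℝ, ‖p - (c + t • θ)‖ ≤ ε * Δ / (4 * μ))
    (hB : ∀ p ∈ B, ∃ t : ℝ, ‖p - (c + t • θ)‖ ≤ ε * Δ / (4 * μ))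
    (hAB : ∀ a ∈ A, ∀ b ∈ B, ⟪a, θ⟫ < ⟪b, θ⟫)
    (astar : EuclideanSpace ℝ (Fin 2)) (hstar : astar ∈ A)
    (hmax : ∀ a ∈ A, ⟪a, θ⟫ ≤ ⟪astar, θ⟫) :
    ∀ a ∈ A, ∀ b ∈ B, ‖a - astar‖ + ‖astar - b‖ ≤ ‖a - b‖ + ε * Δ / μ := by
  intro a ha b hb
  set w := ε * Δ / (4 * μ) with hw
  have h1 := strip_dist θ c hθ w a astar (hA a ha) (hA astar hstar)
  have h2 := strip_dist θ c hθ w astar b (hA astar hstar) (hB b hb)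
  have hsa : ⟪a, θ⟫ ≤ ⟪astar, θ⟫ := hmax a ha
  have hsb : ⟪astar, θ⟫ < ⟪b, θ⟫ := hAB astar hstar b hb
  have e1 : |⟪a - astar, θ⟫| = ⟪astar, θ⟫ - ⟪a, θ⟫ := by
    rw [inner_sub_left, abs_of_nonpos (by linarith)]; ring
  have e2 : |⟪astar - b, θ⟫| = ⟪b, θ⟫ - ⟪astar, θ⟫ := by
    rw [inner_sub_left, abs_of_nonpos (by linarith)]; ring
  have e3 : ⟪b, θ⟫ - ⟪a, θ⟫ ≤ ‖a - b‖ := by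
    have h : |⟪a - b, θ⟫| ≤ ‖a - b‖ := by
      have := abs_real_inner_le_norm (a - b) θ
      rwa [hθ, mul_one] at this
    have h' := (abs_le.mp h).1
    rw [inner_sub_left] at h'
    linarith
  have e4 : (4:ℝ) * w = ε * Δ / μ := by
    rw [hw]; field_simp
  rw [e1] at h1; rw [e2] at h2
  linarith
end

section
/- Let μ > 0, Δ > 0, ε ∈ (0,1). Let p, q, a ∈ ℝ² and let r' ∈ ℝ² be the orthogonal projection of a onto the line through p and q, with r' lying on the segment pq. Suppose ‖p − r'‖ ≥ Δ/(2μ), ‖q − r'‖ ≥ Δ/(2μ), and ‖a − r'‖ ≤ √ε·Δ/(2μ). Then ‖p − a‖ + ‖a − q‖ ≤ (1+ε)·‖p − q‖. -/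
open scoped RealInnerProductSpace

private lemma aux_bound (ε A X W : ℝ) (hε : 0 ≤ ε) (hA : 0 ≤ A) (hX : 0 ≤ X)
    (h2 : A ^ 2 = X ^ 2 + W ^ 2) (hW : W ^ 2 ≤ ε * X ^ 2) : A ≤ (1 + ε) * X := by
  have h : A ^ 2 ≤ ((1 + ε) * X) ^ 2 := by nlinarith [mul_nonneg hε (sq_nonneg X)]
  exact le_of_pow_le_pow_left₀ two_ne_zero (by positivity) h

/-- detouring through a Steiner point `a` close to the segment `pq`
(with the foot of the perpendicular well inside the segment) costs at most a
factor `1 + ε`. -/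
theorem stmt_5 (μ Δ ε : ℝ) (hμ : 0 < μ) (hΔ : 0 < Δ) (hε : ε ∈ Set.Ioo (0:ℝ) 1)
    (p q a r' : EuclideanSpace ℝ (Fin 2))
    (hseg : ‖p - q‖ = ‖p - r'‖ + ‖r' - q‖)
    (hperp : ⟪a - r', p - q⟫ = 0)
    (hp : Δ / (2 * μ) ≤ ‖p - r'‖) (hq : Δ / (2 * μ) ≤ ‖q - r'‖)
    (ha : ‖a - r'‖ ≤ Real.sqrt ε * Δ / (2 * μ)) :
    ‖p - a‖ + ‖a - q‖ ≤ (1 + ε) * ‖p - q‖ := by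
  obtain ⟨hε0, hε1⟩ := hε
  set u := p - r' with hu
  set v := r' - q with hv
  set w := a - r' with hw
  clear_value u v w
  have huv : p - q = u + v := by rw [hu, hv]; abel
  have hd : 0 < Δ / (2 * μ) := by positivity
  have hun : 0 < ‖u‖ := lt_of_lt_of_le hd hp
  have hvn : 0 < ‖v‖ := by
    have : ‖v‖ = ‖q - r'‖ := by rw [hv, ← norm_neg]; congr 1; abel
    rw [this]; exact lt_of_lt_of_le hd hq
  -- equality case of triangle inequality gives inner product equality
  have hinner : ⟪u, v⟫ = ‖u‖ * ‖v‖ := by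
    have h1 : ‖u + v‖ = ‖u‖ + ‖v‖ := by rw [← huv]; exact hseg
    have h2 : ‖u + v‖ ^ 2 = (‖u‖ + ‖v‖) ^ 2 := by rw [h1]
    rw [norm_add_pow_two_real] at h2
    nlinarith
  have hcol : ‖v‖ • u = ‖u‖ • v := inner_eq_norm_mul_iff_real.mp hinner
  -- perpendicularity to both u and v
  have hsum : ⟪w, u⟫ + ⟪w, v⟫ = 0 := by
    rw [← inner_add_right, ← huv]; exact hperp
  have hwv : ⟪w, v⟫ = (‖v‖ / ‖u‖) * ⟪w, u⟫ := by
    have : ⟪w, ‖u‖ • v⟫ = ⟪w, ‖v‖ • u⟫ := by rw [hcol]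
    rw [real_inner_smul_right, real_inner_smul_right] at this
    rw [div_mul_eq_mul_div, eq_div_iff hun.ne']
    linear_combination this
  have hwu : ⟪w, u⟫ = 0 := by
    rw [hwv] at hsum
    have h1 : (1 + ‖v‖ / ‖u‖) * ⟪w, u⟫ = 0 := by linear_combination hsum
    have h2 : 0 < 1 + ‖v‖ / ‖u‖ := by positivity
    exact (mul_eq_zero.mp h1).resolve_left (ne_of_gt h2)
  have hwv0 : ⟪w, v⟫ = 0 := by rw [hwv, hwu, mul_zero]
  -- bound on ‖w‖²
  have hw2 : ‖w‖ ^ 2 ≤ ε * (Δ / (2 * μ)) ^ 2 := by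
    have hs : Real.sqrt ε * Δ / (2 * μ) = Real.sqrt ε * (Δ / (2 * μ)) := by ring
    have h1 : ‖w‖ ^ 2 ≤ (Real.sqrt ε * (Δ / (2 * μ))) ^ 2 := by
      apply sq_le_sq' _ (hs ▸ ha)
      nlinarith [norm_nonneg w, Real.sqrt_nonneg ε, hd.le]
    calc ‖w‖ ^ 2 ≤ (Real.sqrt ε * (Δ / (2 * μ))) ^ 2 := h1
      _ = ε * (Δ / (2 * μ)) ^ 2 := by
          rw [mul_pow, Real.sq_sqrt hε0.le]
  -- Pythagorean identities
  have hpa : ‖p - a‖ ^ 2 = ‖u‖ ^ 2 + ‖w‖ ^ 2 := by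
    have : p - a = u - w := by rw [hu, hw]; abel
    have h0 : ⟪u, w⟫ = 0 := by rw [real_inner_comm]; exact hwu
    rw [this, norm_sub_pow_two_real, h0]; ring
  have haq : ‖a - q‖ ^ 2 = ‖w‖ ^ 2 + ‖v‖ ^ 2 := by
    have : a - q = w + v := by rw [hv, hw]; abel
    rw [this, norm_add_pow_two_real, hwv0]; ring
  -- combine
  have key : ∀ x : ℝ, 0 < x → Δ / (2 * μ) ≤ x → ‖w‖ ^ 2 ≤ ε * x ^ 2 := by
    intro x hx hdx
    calc ‖w‖ ^ 2 ≤ ε * (Δ / (2 * μ)) ^ 2 := hw2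
      _ ≤ ε * x ^ 2 :=
        mul_le_mul_of_nonneg_left (pow_le_pow_left₀ hd.le hdx 2) hε0.le
  have h1 : ‖p - a‖ ≤ (1 + ε) * ‖u‖ :=
    aux_bound ε _ _ _ hε0.le (norm_nonneg _) (norm_nonneg _) hpa (key ‖u‖ hun hp)
  have h2 : ‖a - q‖ ≤ (1 + ε) * ‖v‖ := by
    have hq' : Δ / (2 * μ) ≤ ‖v‖ := by
      have : ‖v‖ = ‖q - r'‖ := by rw [hv, ← norm_neg]; congr 1; abel
      rw [this]; exact hq
    have haq' : ‖a - q‖ ^ 2 = ‖v‖ ^ 2 + ‖w‖ ^ 2 := by rw [haq]; ring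
    exact aux_bound ε _ _ _ hε0.le (norm_nonneg _) (norm_nonneg _) haq' (key ‖v‖ hvn hq')
  calc ‖p - a‖ + ‖a - q‖ ≤ (1 + ε) * ‖u‖ + (1 + ε) * ‖v‖ := add_le_add h1 h2
    _ = (1 + ε) * (‖u‖ + ‖v‖) := by ring
    _ = (1 + ε) * ‖p - q‖ := by rw [hseg]
end

section
/- Let G be a directed graph in which every vertex has out-degree at most α and in-degree at most β. Perform the following modification: for each vertex u, partition the incoming arcs of u into groups M_1(u), M_2(u), … (indexed by nonempty levels); keep the arcs of the first group directed into u; for every subsequent group M_j(u), pick a vertex w in a previous group and redirect each arc (v,u) with v ∈ M_j(u) to (v,w). Then in the resulting graph every vertex has total degree at most α + β + αβ. -/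
/-- the degree-reduction (edge-redirection) procedure of
Chan–Gupta–Maggs–Zhou. `E` is the arc set of a directed graph with out-degree ≤ α
and in-degree ≤ β. The in-arcs of each vertex `u` are partitioned into groups
`grp`; arcs in the first (index 0) group are kept, and every arc in a later group
`j` is redirected to point at `tgt u j`, a vertex chosen from a strictly earlier
group of `u` (distinct groups choose distinct targets). Then every vertex of the
resulting graph has total degree at most α + β + αβ. -/
theorem stmt_15 {V : Type*} [DecidableEq V] (α β : ℕ)
    (E : Finset (V × V))
    (hout : ∀ v : V, (E.filter (fun e => e.1 = v)).card ≤ α)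
    (hin : ∀ v : V, (E.filter (fun e => e.2 = v)).card ≤ β)
    (grp : V × V → ℕ) (tgt : V → ℕ → V)
    -- the target of a nonempty non-first group is the source of an in-arc of u
    -- lying in a strictly earlier group:
    (htgt : ∀ u : V, ∀ j : ℕ, j ≠ 0 → (∃ e ∈ E, e.2 = u ∧ grp e = j) →
      ∃ e' ∈ E, e'.2 = u ∧ grp e' < j ∧ e'.1 = tgt u j)
    -- distinct (nonempty, non-first) groups of u pick distinct targets:
    (htgt_inj : ∀ u : V, ∀ j j' : ℕ, j ≠ 0 → j' ≠ 0 →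
      (∃ e ∈ E, e.2 = u ∧ grp e = j) → (∃ e ∈ E, e.2 = u ∧ grp e = j') →
      tgt u j = tgt u j' → j = j')
    -- the modified arcs:
    (f : V × V → V × V)
    (hf : ∀ e ∈ E, f e = if grp e = 0 then e else (e.1, tgt e.2 (grp e))) :
    ∀ x : V,
      (E.filter (fun e => (f e).1 = x)).card + (E.filter (fun e => (f e).2 = x)).card ≤
        α + β + α * β := by
  intro x
  -- out-arcs: f preserves the first component
  have hfst : ∀ e ∈ E, (f e).1 = e.1 := by
    intro e he
    rw [hf e he]
    split <;> rfl
  have hout' : (E.filter (fun e => (f e).1 = x)).card ≤ α := by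
    have : E.filter (fun e => (f e).1 = x) = E.filter (fun e => e.1 = x) := by
      apply Finset.filter_congr
      intro e he
      simp [hfst e he]
    rw [this]; exact hout x
  -- in-arcs: split by whether grp e = 0
  set S := E.filter (fun e => (f e).2 = x) with hS
  set S0 := S.filter (fun e => grp e = 0) with hS0
  set S1 := S.filter (fun e => grp e ≠ 0) with hS1
  have hsplit : S.card = S0.card + S1.card := (Finset.card_filter_add_card_filter_not (fun e => grp e = 0)).symm
  have hS0le : S0.card ≤ β := by
    apply le_trans (Finset.card_le_card ?_) (hin x)
    intro e he
    simp only [hS0, hS, Finset.mem_filter] at he ⊢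
    obtain ⟨⟨heE, hfe⟩, h0⟩ := he
    refine ⟨heE, ?_⟩
    rw [hf e heE, if_pos h0] at hfe
    exact hfe
  -- every e ∈ S1 is an in-arc of some u with tgt u (grp e) = x
  have hS1mem : ∀ e ∈ S1, e ∈ E ∧ grp e ≠ 0 ∧ tgt e.2 (grp e) = x := by
    intro e he
    simp only [hS1, hS, Finset.mem_filter] at he
    obtain ⟨⟨heE, hfe⟩, h0⟩ := he
    rw [hf e heE, if_neg h0] at hfe
    exact ⟨heE, h0, hfe⟩
  have hS1le : S1.card ≤ β * α := by
    have himg : (S1.image Prod.snd).card ≤ α := by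
      apply le_trans (Finset.card_le_card ?_) ?_
      · exact (E.filter (fun e => e.1 = x)).image Prod.snd
      · intro u hu
        simp only [Finset.mem_image] at hu ⊢
        obtain ⟨e, he, hu⟩ := hu
        obtain ⟨heE, h0, htx⟩ := hS1mem e he
        obtain ⟨e', he'E, he'2, _, he'1⟩ := htgt e.2 (grp e) h0 ⟨e, heE, rfl, rfl⟩
        exact ⟨e', Finset.mem_filter.mpr ⟨he'E, he'1.trans (by rw [htx])⟩, he'2.trans hu⟩
      · exact le_trans (Finset.card_image_le) (hout x)
    calc S1.card ≤ β * (S1.image Prod.snd).card := by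
          apply Finset.card_le_mul_card_image
          intro u _
          apply le_trans (Finset.card_le_card ?_) (hin u)
          intro e he
          rw [Finset.mem_filter] at he ⊢
          exact ⟨(hS1mem e he.1).1, he.2⟩
      _ ≤ β * α := Nat.mul_le_mul_left β himg
  calc (E.filter (fun e => (f e).1 = x)).card + S.card
      ≤ α + (β + β * α) := by
        rw [hsplit]
        exact Nat.add_le_add hout' (Nat.add_le_add hS0le hS1le)
    _ = α + β + α * β := by ring
end
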